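/- arXiv:2310.12140 — 6 statements merged into one kernel-verified Lean document; each statement's English description precedes it below -/
import Mathlib

section
/- Let (h_i) be a bounded sequence of positive reals such that lim_{i→∞} i^a · h_i = M for some a ∈ (0,1) and M > 0. Then for any ξ ≥ 0, lim_{n→∞} n^{a-ξ-1} · Σ_{i=1}^n i^ξ h_i = M/(1+ξ-a). -/
/-!
Stolz–Cesàro with denominators `n ^ q`, `q = 1 + ξ - a > 0`, reduces the claim to the ratio of
increments `(n+1)^ξ h(n+1) / ((n+1)^q - n^q)`. Splitting `(n+1)^ξ = (n+1)^a (n+1)^(q-1)`, this is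
`(n+1)^a h(n+1)`, which tends to `M`, divided by `(n+1) (1 - (n/(n+1))^q)`, a difference quotient
of `x ↦ x ^ q` at `1`, which tends to `q`.
-/

open Filter Finset Topology Asymptotics

theorem tendsto_div_of_tendsto_sub_div_sub {a b : ℕ → ℝ} {L : ℝ} (hb : StrictMono b)
    (hb_top : Tendsto b atTop atTop)
    (h : Tendsto (fun n => (a (n + 1) - a n) / (b (n + 1) - b n)) atTop (𝓝 L)) :
    Tendsto (fun n => a n / b n) atTop (𝓝 L) := by
  set c : ℕ → ℝ := fun n => a n - L * b n
  set d : ℕ → ℝ := fun n => b (n + 1) - b n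
  have hd_pos : ∀ n, 0 < d n := fun n => sub_pos.2 (hb n.lt_succ_self)
  have hc_step : (fun n => c (n + 1) - c n) =o[atTop] d := by
    have h0 : Tendsto (fun n => (a (n + 1) - a n) / d n - L) atTop (𝓝 0) := by
      simpa using h.sub_const L
    refine (((isLittleO_one_iff ℝ).2 h0).mul_isBigO (isBigO_refl d atTop)).congr
      (fun n => ?_) (fun n => one_mul _)
    field_simp [(hd_pos n).ne']
    ring
  have hc_sum : (fun n => c n - c 0) =o[atTop] fun n => b n - b 0 := by
    simpa only [d, sum_range_sub] using hc_step.sum_range (fun n => (hd_pos n).le) <| by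
      simpa only [d, sum_range_sub, ← sub_eq_add_neg] using
        tendsto_atTop_add_const_right _ (-b 0) hb_top
  have hconst : ∀ x : ℝ, (fun _ => x) =o[atTop] b := fun x =>
    isLittleO_const_left.2 (Or.inr (tendsto_abs_atTop_atTop.comp hb_top))
  have hb_sub : (fun n => b n - b 0) =O[atTop] b := (isBigO_refl b atTop).sub (hconst _).isBigO
  have hc : c =o[atTop] b :=
    ((hc_sum.trans_isBigO hb_sub).add (hconst (c 0))).congr_left fun n => sub_add_cancel _ _
  have hlim := hc.tendsto_div_nhds_zero.add_const L
  rw [zero_add] at hlim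
  refine hlim.congr' ?_
  filter_upwards [hb_top.eventually_ne_atTop 0] with n hn
  field_simp
  ring

theorem tendsto_rpow_succ_sub_rpow_div (q : ℝ) :
    Tendsto (fun n : ℕ => (((n : ℝ) + 1) ^ q - (n : ℝ) ^ q) / ((n : ℝ) + 1) ^ (q - 1))
      atTop (𝓝 q) := by
  have hderiv : HasDerivAt (fun x : ℝ => x ^ q) q 1 := by
    simpa using Real.hasDerivAt_rpow_const (x := 1) (p := q) (Or.inl one_ne_zero)
  have hy : Tendsto (fun n : ℕ => (n : ℝ) / (n + 1)) atTop (𝓝[≠] 1) :=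
    tendsto_nhdsWithin_iff.2 ⟨tendsto_natCast_div_add_atTop 1,
      Eventually.of_forall fun n => (div_lt_one (by positivity)).2 (lt_add_one _) |>.ne⟩
  refine ((hasDerivAt_iff_tendsto_slope.1 hderiv).comp hy).congr fun n => ?_
  have hn : (0 : ℝ) < n + 1 := by positivity
  simp only [Function.comp, slope_def_field, Real.one_rpow,
    Real.div_rpow (Nat.cast_nonneg n) hn.le, Real.rpow_sub_one hn.ne']
  field_simp
  ring

theorem stmt_0_general (h : ℕ → ℝ) (a M ξ : ℝ)
    (ha1 : a < 1) (hξ : 0 ≤ ξ)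
    (hlim : Tendsto (fun i : ℕ => (i : ℝ) ^ a * h i) atTop (nhds M)) :
    Tendsto (fun n : ℕ =>
        (n : ℝ) ^ (a - ξ - 1) * ∑ i ∈ Finset.Icc 1 n, (i : ℝ) ^ ξ * h i)
      atTop (nhds (M / (1 + ξ - a))) := by
  set q := 1 + ξ - a
  have hq : 0 < q := by linarith
  have hstep : Tendsto (fun n : ℕ => ((n : ℝ) + 1) ^ a * h (n + 1) /
      ((((n : ℝ) + 1) ^ q - (n : ℝ) ^ q) / ((n : ℝ) + 1) ^ (q - 1)))
      atTop (𝓝 (M / q)) := by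
    refine Tendsto.div ?_ (tendsto_rpow_succ_sub_rpow_div q) hq.ne'
    simpa [Function.comp_def] using hlim.comp (tendsto_add_atTop_nat 1)
  have hquot := tendsto_div_of_tendsto_sub_div_sub
    (a := fun n => ∑ i ∈ Icc 1 n, (i : ℝ) ^ ξ * h i)
    (fun m n hmn => Real.rpow_lt_rpow (Nat.cast_nonneg m) (Nat.cast_lt.2 hmn) hq)
    ((tendsto_rpow_atTop hq).comp tendsto_natCast_atTop_atTop) <| hstep.congr fun n => by
      have hn : (0 : ℝ) < n + 1 := by positivity
      rw [sum_Icc_succ_top (Nat.le_add_left 1 n), add_sub_cancel_left, Nat.cast_add_one,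
        div_div_eq_mul_div, show ξ = a + (q - 1) by ring, Real.rpow_add hn]
      ring
  refine hquot.congr fun n => ?_
  rw [show a - ξ - 1 = -q by ring, Real.rpow_neg (Nat.cast_nonneg n), inv_mul_eq_div]

/-- Lemma 5 (elementary limit lemma): if `h` is a bounded positive sequence with
`i^a * h i → M` for `a ∈ (0,1)`, `M > 0`, then for any `ξ ≥ 0`,
`n^(a-ξ-1) * ∑_{i=1}^n i^ξ h i → M / (1 + ξ - a)`. -/
theorem stmt_0 (h : ℕ → ℝ) (a M ξ : ℝ)
    (ha : 0 < a) (ha1 : a < 1) (hM : 0 < M) (hξ : 0 ≤ ξ)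
    (hpos : ∀ i, 0 < h i) (hbdd : ∃ B : ℝ, ∀ i, h i ≤ B)
    (hlim : Tendsto (fun i : ℕ => (i : ℝ) ^ a * h i) atTop (nhds M)) :
    Tendsto (fun n : ℕ =>
        (n : ℝ) ^ (a - ξ - 1) * ∑ i ∈ Finset.Icc 1 n, (i : ℝ) ^ ξ * h i)
      atTop (nhds (M / (1 + ξ - a))) :=
  stmt_0_general h a M ξ ha1 hξ hlim
end

section
/- Let a ∈ [0,1) and A > 0. There exists a constant C(a,A) such that for all integers n ≥ i ≥ 1, Σ_{k=i}^n exp(−(A/2) Σ_{l=i}^{k-1} l^{-a}) ≤ C(a,A) · i^a. -/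
/-!
Write `c = A/2` and `E k = exp (-c ∑_{l=i}^{k-1} l^{-a})`, so that
`E (k+1) = E k · exp (-c k^{-a})`. The potential `f k = (k^a + D) E k` drops by at least `δ E k`
at every step, `δ = c / (2(1+c))`: the factor `exp (-c k^{-a}) ≤ k^a / (k^a + c)` beats the growth
`(k+1)^a - k^a ≤ k^{a-1}` as soon as `k^a ≤ c k / 2`, and the constant `D` pays for the finitely
many `k` where this fails (since `a < 1`).
Telescoping gives `δ ∑ E k ≤ f i = i^a + D ≤ (1 + D) i^a`.
-/

open Finset Filter

theorem sum_Icc_mul_le_of_le_sub_succ {E f : ℕ → ℝ} {δ : ℝ} {i n : ℕ} (hin : i ≤ n + 1)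
    (hstep : ∀ k ∈ Icc i n, δ * E k ≤ f k - f (k + 1)) (hf : 0 ≤ f (n + 1)) :
    δ * ∑ k ∈ Icc i n, E k ≤ f i := by
  have htele : ∑ k ∈ Icc i n, (f k - f (k + 1)) = f i - f (n + 1) := by
    have := sum_Ico_sub (fun k => -f k) hin
    simp only [neg_sub_neg] at this
    rwa [← Ico_add_one_right_eq_Icc]
  rw [mul_sum]
  linarith [sum_le_sum hstep]

theorem exists_rpow_le_mul_add {a ε : ℝ} (ha : a < 1) (hε : 0 < ε) :
    ∃ M : ℝ, 0 ≤ M ∧ ∀ x : ℝ, 1 ≤ x → x ^ a ≤ ε * x + M := by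
  obtain ⟨K, hK⟩ := eventually_atTop.1
    ((tendsto_rpow_neg_atTop (sub_pos.2 ha)).eventually (gt_mem_nhds hε))
  refine ⟨max K 0, le_max_right _ _, fun x hx => ?_⟩
  have hx0 : 0 < x := by linarith
  rcases le_or_gt K x with hKx | hxK
  · have hsmall : x ^ (a - 1) ≤ ε := by simpa using (hK x hKx).le
    have : x ^ a ≤ ε * x := by
      rw [Real.rpow_sub_one hx0.ne', div_le_iff₀ hx0] at hsmall
      exact hsmall
    nlinarith [le_max_right K 0]
  · have : x ^ a ≤ x := Real.rpow_le_self_of_one_le hx ha.le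
    nlinarith [le_max_left K 0]

theorem potential_drop {c D x y k e : ℝ} (hc : 0 < c) (hD : 0 ≤ D) (hx : 1 ≤ x)
    (hxk : x ≤ k) (hy : 0 ≤ y) (hyk : y * k ≤ x * (k + 1)) (hex : e * (x + c) ≤ x)
    (hdrift : x ≤ c / 2 * k + c * D) :
    c / (2 * (1 + c)) ≤ x + D - (y + D) * e := by
  have hk : 0 < k := by linarith
  have hxc : 0 < x + c := by linarith
  have he' : e ≤ x / (x + c) := by rw [le_div_iff₀ hxc]; exact hex
  have hsq : x * (y - x) ≤ c / 2 * x + c * D := by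
    refine le_of_mul_le_mul_right ?_ hk
    calc x * (y - x) * k = x * (y * k - x * k) := by ring
      _ ≤ x * x := by gcongr; linarith
      _ ≤ x * (c / 2 * k + c * D) := by gcongr
      _ ≤ (c / 2 * x + c * D) * k := by
        nlinarith [mul_nonneg (mul_nonneg hc.le hD) (sub_nonneg.2 hxk)]
  calc c / (2 * (1 + c)) ≤ (c / 2 * x) / (x + c) := by
        rw [div_le_div_iff₀ (by positivity) hxc]
        nlinarith [mul_nonneg (mul_nonneg hc.le hc.le) (sub_nonneg.2 hx)]
    _ ≤ ((x + D) * (x + c) - (y + D) * x) / (x + c) := by gcongr; linarith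
    _ = x + D - (y + D) * (x / (x + c)) := by field_simp
    _ ≤ x + D - (y + D) * e := by gcongr

theorem rpow_succ_mul_le {a k : ℝ} (ha : a ≤ 1) (hk : 0 < k) :
    (k + 1) ^ a * k ≤ k ^ a * (k + 1) := by
  have h := Real.rpow_le_rpow_of_nonpos hk (le_add_of_nonneg_right zero_le_one) (sub_nonpos.2 ha)
  rw [Real.rpow_sub_one hk.ne', Real.rpow_sub_one (by positivity),
    div_le_div_iff₀ (by positivity) hk] at h
  exact h

theorem exp_neg_mul_inv_mul_le {c x : ℝ} (hx : 0 < x) :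
    Real.exp (-c * x⁻¹) * (x + c) ≤ x := by
  have h := Real.add_one_le_exp (c * x⁻¹)
  rw [neg_mul, Real.exp_neg, inv_mul_le_iff₀ (Real.exp_pos _)]
  calc x + c = x * (c * x⁻¹ + 1) := by field_simp; ring
    _ ≤ x * Real.exp (c * x⁻¹) := by gcongr
    _ = _ := mul_comm _ _

theorem potential_drop_rpow {a c D k : ℝ} (ha0 : 0 ≤ a) (ha1 : a ≤ 1) (hc : 0 < c)
    (hD : 0 ≤ D) (hk : 1 ≤ k) (hdrift : k ^ a ≤ c / 2 * k + c * D) :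
    c / (2 * (1 + c)) ≤ k ^ a + D - ((k + 1) ^ a + D) * Real.exp (-c * k ^ (-a)) := by
  have hk0 : 0 < k := by linarith
  have hx : 1 ≤ k ^ a := Real.one_le_rpow hk ha0
  rw [Real.rpow_neg hk0.le]
  exact potential_drop hc hD hx (Real.rpow_le_self_of_one_le hk ha1) (by positivity)
    (rpow_succ_mul_le ha1 hk0) (exp_neg_mul_inv_mul_le (by positivity)) hdrift

theorem exp_neg_mul_sum_Ico_succ (c : ℝ) (g : ℕ → ℝ) {i k : ℕ} (hik : i ≤ k) :
    Real.exp (-c * ∑ l ∈ Ico i (k + 1), g l) =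
      Real.exp (-c * ∑ l ∈ Ico i k, g l) * Real.exp (-c * g k) := by
  rw [sum_Ico_succ_top hik, mul_add, Real.exp_add]

/-- Step (I) of Lemma 4: for `a ∈ [0,1)`, `A > 0`, there is a constant `C(a,A)` with
`∑_{k=i}^n exp(−(A/2) ∑_{l=i}^{k−1} l^{−a}) ≤ C(a,A) i^a` uniformly in `n`. -/
theorem stmt_11 (a A : ℝ) (ha0 : 0 ≤ a) (ha1 : a < 1) (hA : 0 < A) :
    ∃ C : ℝ, 0 < C ∧ ∀ n i : ℕ, 1 ≤ i → i ≤ n →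
      ∑ k ∈ Icc i n, Real.exp (-(A / 2) * ∑ l ∈ Ico i k, (l : ℝ) ^ (-a)) ≤
        C * (i : ℝ) ^ a := by
  set c := A / 2
  have hc : 0 < c := by positivity
  obtain ⟨M, hM0, hM⟩ := exists_rpow_le_mul_add ha1 (half_pos hc)
  set D := M / c
  have hdrift : ∀ x : ℝ, 1 ≤ x → x ^ a ≤ c / 2 * x + c * D := fun x hx => by
    rw [mul_div_cancel₀ M hc.ne']; exact hM x hx
  set δ := c / (2 * (1 + c))
  refine ⟨(1 + D) / δ, by positivity, fun n i hi hin => ?_⟩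
  set E : ℕ → ℝ := fun k => Real.exp (-c * ∑ l ∈ Ico i k, (l : ℝ) ^ (-a))
  have hstep : ∀ k ∈ Icc i n,
      δ * E k ≤ ((k : ℝ) ^ a + D) * E k - (((k + 1 : ℕ) : ℝ) ^ a + D) * E (k + 1) := by
    intro k hk
    have hik := (mem_Icc.1 hk).1
    have hk1 : (1 : ℝ) ≤ k := by exact_mod_cast hi.trans hik
    have h := potential_drop_rpow ha0 ha1.le hc (by positivity) hk1 (hdrift k hk1)
    simp only [E, exp_neg_mul_sum_Ico_succ c _ hik, Nat.cast_add_one]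
    nlinarith [Real.exp_pos (-c * ∑ l ∈ Ico i k, (l : ℝ) ^ (-a))]
  have hsum := sum_Icc_mul_le_of_le_sub_succ (by omega) hstep (by positivity)
  have hi1 : 1 ≤ (i : ℝ) ^ a := Real.one_le_rpow (by exact_mod_cast hi) ha0
  have hEi : E i = 1 := by simp [E]
  rw [hEi, mul_one] at hsum
  rw [div_mul_eq_mul_div, le_div_iff₀ (by positivity)]
  nlinarith [mul_le_mul_of_nonneg_left hi1 (by positivity : 0 ≤ D)]
end

section
/- Let a ∈ [0,1) and A > 0. There exists a constant C(a,A) such that for all integers n ≥ j ≥ 1, Σ_{i=j}^n i^a · exp(−A Σ_{l=j}^{i-1} l^{-a}) ≤ C(a,A) · j^{2a}. -/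
/-!
Bounding each `l ^ (-a)` below by `i ^ (-a)` gives `∑_{l=j}^{i-1} l ^ (-a) ≥ (i - j) i ^ (-a)`.
For `i ≤ 2j` the summand is then at most `2 j^a r^(i-j)` with `r = exp (-A / (2 j^a))`, and the
geometric series contributes `2 j^a / (1 - r) ≤ 2 j^a (1 + 2 j^a / A) = O(j^(2a))`. For `i ≥ 2j` it
is at most `i^a exp (-(A/2) i^(1-a)) = O(i^(-2))`, whose sum is bounded independently of `j`.
-/

open Finset Real

lemma rpow_le_two_mul_rpow {a x y : ℝ} (ha0 : 0 ≤ a) (ha1 : a ≤ 1) (hx : 0 ≤ x)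
    (hxy : x ≤ 2 * y) : x ^ a ≤ 2 * y ^ a := by
  have hy : 0 ≤ y := by linarith
  calc x ^ a ≤ (2 * y) ^ a := rpow_le_rpow hx hxy ha0
    _ = 2 ^ a * y ^ a := mul_rpow zero_le_two hy
    _ ≤ 2 * y ^ a := by
      gcongr
      exact rpow_le_self_of_one_le one_le_two ha1

lemma exp_neg_le_factorial_div_pow {y : ℝ} (hy : 0 < y) (m : ℕ) :
    exp (-y) ≤ m.factorial / y ^ m := by
  rw [exp_neg, ← inv_div]
  exact inv_anti₀ (by positivity) (pow_div_factorial_le_exp _ hy.le m)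

lemma exists_rpow_mul_exp_neg_le (p q : ℝ) {b c : ℝ} (hb : 0 < b) (hc : 0 < c) :
    ∃ K, 0 < K ∧ ∀ x : ℝ, 1 ≤ x → x ^ p * exp (-(c * x ^ b)) ≤ K * x ^ (-q) := by
  set m := ⌈(p + q) / b⌉₊
  refine ⟨m.factorial / c ^ m, by positivity, fun x hx => ?_⟩
  have hx0 : 0 < x := by linarith
  have hm : p + q ≤ b * m := by
    have := Nat.le_ceil ((p + q) / b)
    rwa [div_le_iff₀ hb, mul_comm] at this
  calc x ^ p * exp (-(c * x ^ b))
      ≤ x ^ p * (m.factorial / (c * x ^ b) ^ m) := by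
        gcongr
        exact exp_neg_le_factorial_div_pow (by positivity) m
    _ = m.factorial / c ^ m * x ^ (p - b * m) := by
        rw [rpow_sub hx0, rpow_mul hx0.le, rpow_natCast, mul_pow]
        field_simp
    _ ≤ m.factorial / c ^ m * x ^ (-q) := by
        gcongr
        linarith

lemma inv_one_sub_exp_neg_le {x : ℝ} (hx : 0 < x) : (1 - exp (-x))⁻¹ ≤ 1 + x⁻¹ := by
  have hex : x ≤ exp x - 1 := by linarith [add_one_le_exp x]
  have hpos : 0 < exp x - 1 := by linarith
  calc (1 - exp (-x))⁻¹ = 1 + (exp x - 1)⁻¹ := by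
        rw [exp_neg]
        field_simp
        ring
    _ ≤ 1 + x⁻¹ := by gcongr

lemma sum_Icc_pow_sub_le {r : ℝ} (h0 : 0 ≤ r) (h1 : r < 1) (j n : ℕ) :
    ∑ i ∈ Icc j n, r ^ (i - j) ≤ (1 - r)⁻¹ := by
  rw [← Ico_add_one_right_eq_Icc, sum_Ico_eq_sum_range]
  simp only [Nat.add_sub_cancel_left]
  simpa [← range_eq_Ico] using geom_sum_Ico_le_of_lt_one (m := 0) (n := n + 1 - j) h0 h1

lemma mul_sum_Icc_exp_neg_pow_le {A y : ℝ} (hA : 0 < A) (hy : 1 ≤ y) (j n : ℕ) :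
    y * ∑ i ∈ Icc j n, exp (-(A / (2 * y))) ^ (i - j) ≤ (1 + 2 / A) * y ^ 2 := by
  have hx : 0 < A / (2 * y) := by positivity
  calc y * ∑ i ∈ Icc j n, exp (-(A / (2 * y))) ^ (i - j) ≤ y * (1 + (A / (2 * y))⁻¹) := by
        gcongr
        exact (sum_Icc_pow_sub_le (exp_pos _).le (exp_lt_one_iff.2 (neg_neg_of_pos hx)) j n).trans
          (inv_one_sub_exp_neg_le hx)
    _ = y + 2 / A * y ^ 2 := by field_simp
    _ ≤ (1 + 2 / A) * y ^ 2 := by nlinarith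

lemma sum_Icc_rpow_neg_two_le {j : ℕ} (hj : 1 ≤ j) (n : ℕ) :
    ∑ i ∈ Icc j n, (i : ℝ) ^ (-2 : ℝ) ≤ 2 := by
  have hsub : Icc j n ⊆ Ioo 0 (n + 1) := fun i hi => by
    simp only [mem_Icc, mem_Ioo] at hi ⊢; omega
  calc ∑ i ∈ Icc j n, (i : ℝ) ^ (-2 : ℝ) = ∑ i ∈ Icc j n, ((i : ℝ) ^ 2)⁻¹ := by
        simp [rpow_neg (Nat.cast_nonneg _)]
    _ ≤ ∑ i ∈ Ioo 0 (n + 1), ((i : ℝ) ^ 2)⁻¹ :=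
        sum_le_sum_of_subset_of_nonneg hsub fun _ _ _ => by positivity
    _ ≤ 2 := by simpa using sum_Ioo_inv_sq_le (α := ℝ) 0 (n + 1)

lemma card_mul_rpow_neg_le_sum_Ico {a : ℝ} (ha : 0 ≤ a) {i j : ℕ} (hj : 1 ≤ j) :
    ((i - j : ℕ) : ℝ) * (i : ℝ) ^ (-a) ≤ ∑ l ∈ Ico j i, (l : ℝ) ^ (-a) := by
  have hterm : ∀ l ∈ Ico j i, (i : ℝ) ^ (-a) ≤ (l : ℝ) ^ (-a) := fun l hl => by
    rw [mem_Ico] at hl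
    exact rpow_le_rpow_of_nonpos (by exact_mod_cast hj.trans hl.1) (by exact_mod_cast hl.2.le)
      (by linarith)
  simpa [nsmul_eq_mul] using card_nsmul_le_sum (Ico j i) _ _ hterm

lemma rpow_mul_exp_neg_sum_le_of_le_two_mul {a A : ℝ} (ha0 : 0 ≤ a) (ha1 : a ≤ 1) (hA : 0 ≤ A)
    {i j : ℕ} (hj : 1 ≤ j) (hji : j ≤ i) (hi : i ≤ 2 * j) :
    (i : ℝ) ^ a * exp (-A * ∑ l ∈ Ico j i, (l : ℝ) ^ (-a)) ≤
      2 * (j : ℝ) ^ a * exp (-(A / (2 * (j : ℝ) ^ a))) ^ (i - j) := by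
  have hi0 : (0 : ℝ) < i := by exact_mod_cast hj.trans hji
  have hia : (i : ℝ) ^ a ≤ 2 * (j : ℝ) ^ a :=
    rpow_le_two_mul_rpow ha0 ha1 hi0.le (by exact_mod_cast hi)
  have hsum : ((i - j : ℕ) : ℝ) * (2 * (j : ℝ) ^ a)⁻¹ ≤ ∑ l ∈ Ico j i, (l : ℝ) ^ (-a) :=
    calc ((i - j : ℕ) : ℝ) * (2 * (j : ℝ) ^ a)⁻¹ ≤ ((i - j : ℕ) : ℝ) * (i : ℝ) ^ (-a) := by
          rw [rpow_neg hi0.le]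
          gcongr
      _ ≤ _ := card_mul_rpow_neg_le_sum_Ico ha0 hj
  rw [← exp_nat_mul]
  refine mul_le_mul hia (exp_le_exp.2 ?_) (exp_pos _).le (by positivity)
  calc -A * ∑ l ∈ Ico j i, (l : ℝ) ^ (-a) ≤ -A * (((i - j : ℕ) : ℝ) * (2 * (j : ℝ) ^ a)⁻¹) :=
        mul_le_mul_of_nonpos_left hsum (by linarith)
    _ = ((i - j : ℕ) : ℝ) * -(A / (2 * (j : ℝ) ^ a)) := by ring

lemma rpow_mul_exp_neg_sum_le_of_two_mul_le {a A : ℝ} (ha0 : 0 ≤ a) (hA : 0 ≤ A)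
    {i j : ℕ} (hj : 1 ≤ j) (hi : 2 * j ≤ i) :
    (i : ℝ) ^ a * exp (-A * ∑ l ∈ Ico j i, (l : ℝ) ^ (-a)) ≤
      (i : ℝ) ^ a * exp (-(A / 2 * (i : ℝ) ^ (1 - a))) := by
  have hi0 : (0 : ℝ) < i := by exact_mod_cast (by omega : 0 < i)
  have hcard : (i : ℝ) / 2 ≤ ((i - j : ℕ) : ℝ) := by
    rw [Nat.cast_sub (by omega)]
    linarith [show (2 * j : ℝ) ≤ i by exact_mod_cast hi]
  have hsum : (i : ℝ) / 2 * (i : ℝ) ^ (-a) ≤ ∑ l ∈ Ico j i, (l : ℝ) ^ (-a) :=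
    (mul_le_mul_of_nonneg_right hcard (rpow_nonneg hi0.le _)).trans
      (card_mul_rpow_neg_le_sum_Ico ha0 hj)
  have hpow : (i : ℝ) ^ (1 - a) = i * (i : ℝ) ^ (-a) := by
    rw [sub_eq_add_neg, rpow_add hi0, rpow_one]
  gcongr
  rw [hpow]
  nlinarith [mul_le_mul_of_nonneg_left hsum hA]

/-- Step (II) of Lemma 4: for `a ∈ [0,1)`, `A > 0`, there is a constant `C(a,A)` with
`∑_{i=j}^n i^a exp(−A ∑_{l=j}^{i−1} l^{−a}) ≤ C(a,A) j^{2a}` uniformly in `n`. -/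
theorem stmt_12 (a A : ℝ) (ha0 : 0 ≤ a) (ha1 : a < 1) (hA : 0 < A) :
    ∃ C : ℝ, 0 < C ∧ ∀ n j : ℕ, 1 ≤ j → j ≤ n →
      ∑ i ∈ Icc j n, (i : ℝ) ^ a * Real.exp (-A * ∑ l ∈ Ico j i, (l : ℝ) ^ (-a)) ≤
        C * (j : ℝ) ^ (2 * a) := by
  obtain ⟨K, hK, hdecay⟩ :=
    exists_rpow_mul_exp_neg_le a 2 (b := 1 - a) (c := A / 2) (by linarith) (by positivity)
  refine ⟨2 + 4 / A + 2 * K, by positivity, fun n j hj _ => ?_⟩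
  set y := (j : ℝ) ^ a
  have hy : 1 ≤ y := one_le_rpow (by exact_mod_cast hj) ha0
  have hy2 : y ^ 2 = (j : ℝ) ^ (2 * a) := by rw [mul_comm, rpow_mul (Nat.cast_nonneg j), rpow_two]
  set r := exp (-(A / (2 * y)))
  have hpoint : ∀ i ∈ Icc j n, (i : ℝ) ^ a * exp (-A * ∑ l ∈ Ico j i, (l : ℝ) ^ (-a)) ≤
      2 * y * r ^ (i - j) + K * (i : ℝ) ^ (-2 : ℝ) := by
    intro i hi
    rw [mem_Icc] at hi
    rcases le_total i (2 * j) with hnear | hfar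
    · exact (rpow_mul_exp_neg_sum_le_of_le_two_mul ha0 ha1.le hA.le hj hi.1 hnear).trans
        (le_add_of_nonneg_right (by positivity))
    · exact ((rpow_mul_exp_neg_sum_le_of_two_mul_le ha0 hA.le hj hfar).trans
        (hdecay i (by exact_mod_cast hj.trans hi.1))).trans (le_add_of_nonneg_left (by positivity))
  calc _ ≤ ∑ i ∈ Icc j n, (2 * y * r ^ (i - j) + K * (i : ℝ) ^ (-2 : ℝ)) := sum_le_sum hpoint
    _ = 2 * (y * ∑ i ∈ Icc j n, r ^ (i - j)) + K * ∑ i ∈ Icc j n, (i : ℝ) ^ (-2 : ℝ) := by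
        rw [sum_add_distrib, ← mul_sum, ← mul_sum]
        ring
    _ ≤ 2 * ((1 + 2 / A) * y ^ 2) + K * 2 := by
        gcongr 2 * ?_ + K * ?_
        · exact mul_sum_Icc_exp_neg_pow_le hA hy j n
        · exact sum_Icc_rpow_neg_two_le hj n
    _ ≤ (2 + 4 / A + 2 * K) * y ^ 2 := by
        have hKy : K * 2 ≤ 2 * K * y ^ 2 := by nlinarith [one_le_pow₀ (n := 2) hy]
        linarith [show 2 * ((1 + 2 / A) * y ^ 2) = (2 + 4 / A) * y ^ 2 by ring]
    _ = _ := by rw [hy2]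
end

section
/- Let (η_i)_{i≥1} be random vectors with η_i = 0 for i < j, and suppose for all i ≥ j, E[‖η_{i+1}‖²/‖η_i‖² | F^i] ≤ exp(−A i^{-a}) with a ∈ [0,1), A > 0 (interpreting the ratio as 0 when η_i = 0). Let η̂_n = n^{-1} Σ_{i=1}^n η_i (with appropriate zero-padding to a common dimension). Then there is a constant C(a,A) such that n² E[‖η̂_n‖² | F^j] ≤ C(a,A) · j^{2a} · ‖η_j‖² almost surely. -/
open MeasureTheory Finset

/-!
Put `c = A / 2` and `p_i = exp (-c ∑_{j ≤ k < i} k^{-a})`. Iterating the contraction with the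
tower property gives `E[‖η_i‖² | F^j] ≤ p_i² ‖η_j‖²`, and Cauchy–Schwarz with weights `p_i` gives
`‖∑ η_i‖² ≤ (∑ p_i) ∑ ‖η_i‖² / p_i`; hence `n² E[‖η̂_n‖² | F^j] ≤ (∑_{i ≥ j} p_i)² ‖η_j‖²`.
For `∑_{i ≥ j} p_i = O(j^a)`: since `1 - e^{-x} ≥ x / (1 + x)`, `p_i ≤ g_i (p_i - p_{i+1})`
whenever `g_i ≥ i^a / c + 1`. Taking `g_i = (i + K)^a / c + 1` with `K` large makes the increments
of `g` at most `1/2` (concavity of `t ↦ t^a`), and summation by parts bounds the sum by `2 g_j`.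
-/

theorem le_mul_sub_mul_exp_neg {x q g : ℝ} (hx : 0 < x) (hq : 0 ≤ q) (hg : x⁻¹ + 1 ≤ g) :
    q ≤ g * (q - q * Real.exp (-x)) := by
  have hexp : Real.exp (-x) * (x + 1) ≤ 1 := by
    rw [Real.exp_neg, inv_mul_le_iff₀ (Real.exp_pos x), mul_one]
    exact Real.add_one_le_exp x
  have hx' : x⁻¹ * x = 1 := inv_mul_cancel₀ hx.ne'
  have h1 : 1 ≤ (x⁻¹ + 1) * (1 - Real.exp (-x)) := by nlinarith [inv_pos.mpr hx]
  have h2 : 0 ≤ 1 - Real.exp (-x) :=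
    sub_nonneg.mpr (Real.exp_le_one_iff.mpr (neg_nonpos.mpr hx.le))
  calc q ≤ q * ((x⁻¹ + 1) * (1 - Real.exp (-x))) := le_mul_of_one_le_right hq h1
    _ ≤ q * (g * (1 - Real.exp (-x))) := by gcongr
    _ = g * (q - q * Real.exp (-x)) := by ring

theorem rpow_add_one_sub_rpow_le {x a : ℝ} (hx : 0 < x) (ha0 : 0 ≤ a) (ha1 : a ≤ 1) :
    (x + 1) ^ a - x ^ a ≤ a * x ^ (a - 1) := by
  have hbern : (1 + x⁻¹) ^ a ≤ 1 + a * x⁻¹ :=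
    rpow_one_add_le_one_add_mul_self (by linarith [inv_pos.mpr hx]) ha0 ha1
  have hsplit : (x + 1) ^ a = x ^ a * (1 + x⁻¹) ^ a := by
    rw [← Real.mul_rpow hx.le (by positivity), mul_add, mul_one, mul_inv_cancel₀ hx.ne']
  rw [hsplit, Real.rpow_sub_one hx.ne', div_eq_mul_inv]
  nlinarith [Real.rpow_pos_of_pos hx a]

theorem rpow_add_one_div_le_add_half {x a c : ℝ} (hx : 0 < x) (ha0 : 0 ≤ a) (ha1 : a ≤ 1)
    (hc : 0 < c) (hxa : 2 * a / c ≤ x ^ (1 - a)) :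
    (x + 1) ^ a / c ≤ x ^ a / c + 1 / 2 := by
  have hinc : a * x ^ (a - 1) ≤ c / 2 := by
    rw [show a - 1 = -(1 - a) by ring, Real.rpow_neg hx.le, ← div_eq_mul_inv,
      div_le_iff₀ (Real.rpow_pos_of_pos hx _)]
    rw [div_le_iff₀ hc] at hxa
    linarith
  rw [div_add' _ _ _ hc.ne', div_le_div_iff_of_pos_right hc]
  linarith [rpow_add_one_sub_rpow_le hx ha0 ha1]

theorem sum_Icc_le_two_mul_of_le_mul_sub {p g : ℕ → ℝ} {m : ℕ}
    (hp : ∀ i, m ≤ i → 0 ≤ p i) (hg : ∀ i, m ≤ i → 0 ≤ g i)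
    (hpg : ∀ i, m ≤ i → p i ≤ g i * (p i - p (i + 1)))
    (hgg : ∀ i, m ≤ i → g (i + 1) ≤ g i + 1 / 2) (n : ℕ) :
    ∑ i ∈ Icc m n, p i ≤ 2 * (g m * p m) := by
  have key : ∀ N, m ≤ N → (∑ i ∈ Icc m N, p i) / 2 + g N * p (N + 1) ≤ g m * p m := by
    intro N hN
    induction N, hN using Nat.le_induction with
    | base =>
      rw [Icc_self, sum_singleton]
      nlinarith [hpg m le_rfl, hp m le_rfl]
    | succ N hN ih =>
      rw [sum_Icc_succ_top (by omega)]
      have hN1 : m ≤ N + 1 := by omega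
      nlinarith [hpg (N + 1) hN1, hgg N hN, hp (N + 1) hN1]
  rcases le_or_gt m n with hmn | hnm
  · nlinarith [key n hmn, hg n hmn, hp (n + 1) (by omega)]
  · rw [Icc_eq_empty (by omega), sum_empty]
    nlinarith [hg m le_rfl, hp m le_rfl]

theorem exists_sum_exp_neg_mul_sum_rpow_neg_le {c a : ℝ} (hc : 0 < c) (ha0 : 0 ≤ a)
    (ha1 : a < 1) :
    ∃ C : ℝ, 0 < C ∧ ∀ j n : ℕ, 1 ≤ j →
      ∑ i ∈ Icc j n, Real.exp (-c * ∑ k ∈ Ico j i, (k : ℝ) ^ (-a)) ≤ C * (j : ℝ) ^ a := by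
  obtain ⟨K, hK⟩ : ∃ K : ℕ, 2 * a / c ≤ (K : ℝ) ^ (1 - a) :=
    (((tendsto_rpow_atTop (by linarith)).comp tendsto_natCast_atTop_atTop).eventually_ge_atTop
      _).exists
  refine ⟨2 * ((1 + K) ^ a / c + 1), by positivity, fun j n hj => ?_⟩
  set p : ℕ → ℝ := fun i => Real.exp (-c * ∑ k ∈ Ico j i, (k : ℝ) ^ (-a))
  set g : ℕ → ℝ := fun i => ((i : ℝ) + K) ^ a / c + 1
  have hpos : ∀ i, j ≤ i → (0 : ℝ) < i := fun i hi => by exact_mod_cast hj.trans hi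
  have hpg : ∀ i, j ≤ i → p i ≤ g i * (p i - p (i + 1)) := by
    intro i hi
    have hsucc : p (i + 1) = p i * Real.exp (-(c * (i : ℝ) ^ (-a))) := by
      simp only [p, sum_Ico_succ_top hi, ← Real.exp_add]
      ring_nf
    rw [hsucc]
    refine le_mul_sub_mul_exp_neg (mul_pos hc (Real.rpow_pos_of_pos (hpos i hi) _))
      (Real.exp_pos _).le ?_
    rw [mul_inv, Real.rpow_neg (hpos i hi).le, inv_inv, inv_mul_eq_div]
    simp only [g]
    gcongr
    linarith
  have hgg : ∀ i, j ≤ i → g (i + 1) ≤ g i + 1 / 2 := by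
    intro i hi
    have hx : 0 < (i : ℝ) + K := by linarith [hpos i hi, (K.cast_nonneg : (0 : ℝ) ≤ K)]
    have hKx : 2 * a / c ≤ ((i : ℝ) + K) ^ (1 - a) :=
      hK.trans (Real.rpow_le_rpow K.cast_nonneg (by linarith [hpos i hi]) (by linarith))
    simp only [g]
    push_cast
    linarith [add_right_comm (i : ℝ) 1 K ▸ rpow_add_one_div_le_add_half hx ha0 ha1.le hc hKx]
  have hpj : p j = 1 := by simp [p]
  have hgj : ((j : ℝ) + K) ^ a ≤ (1 + K) ^ a * (j : ℝ) ^ a := by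
    rw [← Real.mul_rpow (by positivity) (by positivity)]
    gcongr
    nlinarith [(K.cast_nonneg : (0 : ℝ) ≤ K), (by exact_mod_cast hj : (1 : ℝ) ≤ j)]
  calc ∑ i ∈ Icc j n, p i ≤ 2 * (g j * p j) :=
        sum_Icc_le_two_mul_of_le_mul_sub (fun i _ => (Real.exp_pos _).le)
          (fun i _ => by positivity) hpg hgg n
    _ ≤ 2 * ((1 + K) ^ a / c + 1) * (j : ℝ) ^ a := by
      rw [hpj, mul_one, mul_assoc]
      gcongr
      simp only [g]
      rw [add_mul, div_mul_eq_mul_div, one_mul]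
      gcongr
      exact Real.one_le_rpow (by exact_mod_cast hj) ha0

theorem norm_sum_sq_le_sum_mul_sum_sq_div {ι V : Type*} [SeminormedAddCommGroup V]
    (s : Finset ι) (v : ι → V) {w : ι → ℝ} (hw : ∀ i ∈ s, 0 < w i) :
    ‖∑ i ∈ s, v i‖ ^ 2 ≤ (∑ i ∈ s, w i) * ∑ i ∈ s, ‖v i‖ ^ 2 / w i := by
  rcases s.eq_empty_or_nonempty with rfl | hs
  · simp
  have hW : 0 < ∑ i ∈ s, w i := sum_pos hw hs
  calc ‖∑ i ∈ s, v i‖ ^ 2 ≤ (∑ i ∈ s, ‖v i‖) ^ 2 := by gcongr; exact norm_sum_le _ _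
    _ ≤ (∑ i ∈ s, w i) * ∑ i ∈ s, ‖v i‖ ^ 2 / w i := by
      rw [← div_le_iff₀' hW]
      exact sq_sum_div_le_sum_sq_div s _ hw

theorem condExp_le_prod_mul_of_condExp_succ_le {Ω : Type*} {m0 : MeasurableSpace Ω}
    {μ : Measure Ω} {ℱ : Filtration ℕ m0} [SigmaFiniteFiltration μ ℱ]
    {B : ℕ → Ω → ℝ} {c : ℕ → ℝ} {j : ℕ} (hc : ∀ k, j ≤ k → 0 ≤ c k)
    (hB : ∀ i, Integrable (B i) μ) (hBj : StronglyMeasurable[ℱ j] (B j))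
    (hstep : ∀ i, j ≤ i → μ[B (i + 1) | ℱ i] ≤ᵐ[μ] fun ω => c i * B i ω) :
    ∀ i, j ≤ i → μ[B i | ℱ j] ≤ᵐ[μ] fun ω => (∏ k ∈ Ico j i, c k) * B j ω := by
  intro i hi
  induction i, hi using Nat.le_induction with
  | base =>
    rw [condExp_of_stronglyMeasurable (ℱ.le j) hBj (hB j)]
    filter_upwards with ω
    simp
  | succ i hi ih =>
    calc μ[B (i + 1) | ℱ j]
        =ᵐ[μ] μ[μ[B (i + 1) | ℱ i] | ℱ j] :=
          (condExp_condExp_of_le (ℱ.mono hi) (ℱ.le i)).symm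
      _ ≤ᵐ[μ] μ[fun ω => c i * B i ω | ℱ j] :=
        condExp_mono integrable_condExp ((hB i).const_mul _) (hstep i hi)
      _ =ᵐ[μ] fun ω => c i * μ[B i | ℱ j] ω := condExp_smul (c i) (B i) (ℱ j)
      _ ≤ᵐ[μ] fun ω => (∏ k ∈ Ico j (i + 1), c k) * B j ω := by
        filter_upwards [ih] with ω hω
        rw [prod_Ico_succ_top hi, mul_comm _ (c i), mul_assoc]
        exact mul_le_mul_of_nonneg_left hω (hc i hi)

theorem condExp_norm_sum_sq_le {Ω ι V : Type*} {m m0 : MeasurableSpace Ω} {μ : Measure Ω}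
    [NormedAddCommGroup V] (s : Finset ι) {η : ι → Ω → V} {p : ι → ℝ} {Y : Ω → ℝ}
    (hp : ∀ i ∈ s, 0 < p i) (hη : ∀ i ∈ s, AEStronglyMeasurable (η i) μ)
    (hint : ∀ i ∈ s, Integrable (fun ω => ‖η i ω‖ ^ 2) μ)
    (hcond : ∀ i ∈ s, μ[fun ω => ‖η i ω‖ ^ 2 | m] ≤ᵐ[μ] fun ω => p i ^ 2 * Y ω) :
    μ[fun ω => ‖∑ i ∈ s, η i ω‖ ^ 2 | m] ≤ᵐ[μ] fun ω => (∑ i ∈ s, p i) ^ 2 * Y ω := by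
  set P := ∑ i ∈ s, p i
  set G : ι → Ω → ℝ := fun i => (P / p i) • fun ω => ‖η i ω‖ ^ 2
  have hG : ∀ i ∈ s, Integrable (G i) μ := fun i hi => (hint i hi).smul _
  have hGsum : Integrable (∑ i ∈ s, G i) μ := integrable_finsetSum' s hG
  have hpoint : ∀ ω, ‖∑ i ∈ s, η i ω‖ ^ 2 ≤ (∑ i ∈ s, G i) ω := by
    intro ω
    refine (norm_sum_sq_le_sum_mul_sum_sq_div s (fun i => η i ω) hp).trans_eq ?_
    simp only [G, mul_sum, Finset.sum_apply, Pi.smul_apply, smul_eq_mul]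
    exact sum_congr rfl fun i _ => by ring
  have hF : Integrable (fun ω => ‖∑ i ∈ s, η i ω‖ ^ 2) μ := by
    refine hGsum.mono' ?_ (ae_of_all _ fun ω => ?_)
    · exact ((s.aestronglyMeasurable_fun_sum hη).norm.pow 2)
    · rw [Real.norm_of_nonneg (by positivity)]
      exact hpoint ω
  have hGcond : ∀ᵐ ω ∂μ, ∀ i ∈ s, μ[G i | m] ω ≤ P / p i * (p i ^ 2 * Y ω) := by
    rw [Filter.eventually_all_finset]
    intro i hi
    have hP : 0 ≤ P := sum_nonneg fun i hi => (hp i hi).le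
    filter_upwards [condExp_smul (P / p i) (fun ω => ‖η i ω‖ ^ 2) m, hcond i hi] with ω h1 h2
    rw [h1, Pi.smul_apply, smul_eq_mul]
    exact mul_le_mul_of_nonneg_left h2 (div_nonneg hP (hp i hi).le)
  filter_upwards [condExp_mono (m := m) hF hGsum (ae_of_all _ hpoint),
    condExp_finsetSum hG m, hGcond] with ω hmono hsum hle
  calc μ[fun ω => ‖∑ i ∈ s, η i ω‖ ^ 2 | m] ω ≤ ∑ i ∈ s, μ[G i | m] ω := by
        rwa [hsum, Finset.sum_apply] at hmono
    _ ≤ ∑ i ∈ s, P / p i * (p i ^ 2 * Y ω) := sum_le_sum hle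
    _ = ∑ i ∈ s, P * Y ω * p i :=
      sum_congr rfl fun i hi => by field_simp [(hp i hi).ne']
    _ = P ^ 2 * Y ω := by rw [← mul_sum]; ring

/-- Lemma 4 (summable lemma): if `η_i = 0` for `i < j` and the adapted vectors satisfy
the exponential contraction `E[‖η_{i+1}‖² | F^i] ≤ exp(−A i^{−a}) ‖η_i‖²` for `i ≥ j`,
then the averages `η̂_n = n⁻¹ ∑_{i=1}^n η_i` satisfy
`n² E[‖η̂_n‖² | F^j] ≤ C(a,A) j^{2a} ‖η_j‖²` almost surely. -/
theorem stmt_13 {Ω : Type*} {m0 : MeasurableSpace Ω} (μ : Measure Ω)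
    [IsProbabilityMeasure μ] (ℱ : Filtration ℕ m0)
    {V : Type*} [NormedAddCommGroup V] [InnerProductSpace ℝ V]
    (η : ℕ → Ω → V) (j : ℕ) (hj : 1 ≤ j) (A a : ℝ)
    (hA : 0 < A) (ha0 : 0 ≤ a) (ha1 : a < 1)
    (hzero : ∀ i, i < j → η i = 0)
    (hadapted : ∀ i, StronglyMeasurable[ℱ i] (η i))
    (hL2 : ∀ i, MemLp (fun ω => ‖η i ω‖ ^ 2) 1 μ)
    (hcontr : ∀ i, j ≤ i →
      (μ[fun ω => ‖η (i + 1) ω‖ ^ 2 | ℱ i]) ≤ᵐ[μ]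
        fun ω => Real.exp (-A * (i : ℝ) ^ (-a)) * ‖η i ω‖ ^ 2) :
    ∃ C : ℝ, 0 < C ∧ ∀ n : ℕ, 1 ≤ n →
      ∀ᵐ ω ∂μ,
        (n : ℝ) ^ 2 *
            (μ[fun ω' => ‖(n : ℝ)⁻¹ • ∑ i ∈ Icc 1 n, η i ω'‖ ^ 2 | ℱ j]) ω ≤
          C * (j : ℝ) ^ (2 * a) * ‖η j ω‖ ^ 2 := by
  obtain ⟨C, hC, hsum⟩ := exists_sum_exp_neg_mul_sum_rpow_neg_le (half_pos hA) ha0 ha1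
  refine ⟨C ^ 2, by positivity, fun n hn => ?_⟩
  set p : ℕ → ℝ := fun i => Real.exp (-(A / 2) * ∑ k ∈ Ico j i, (k : ℝ) ^ (-a))
  have hint : ∀ i, Integrable (fun ω => ‖η i ω‖ ^ 2) μ :=
    fun i => memLp_one_iff_integrable.mp (hL2 i)
  have hcond : ∀ i ∈ Icc j n,
      μ[fun ω => ‖η i ω‖ ^ 2 | ℱ j] ≤ᵐ[μ] fun ω => p i ^ 2 * ‖η j ω‖ ^ 2 := by
    intro i hi
    have hp_sq : p i ^ 2 = ∏ k ∈ Ico j i, Real.exp (-A * (k : ℝ) ^ (-a)) := by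
      rw [← Real.exp_sum, ← Real.exp_nat_mul, ← mul_sum]
      ring_nf
    rw [hp_sq]
    exact condExp_le_prod_mul_of_condExp_succ_le (fun k _ => (Real.exp_pos _).le) hint
      ((hadapted j).norm.pow 2) hcontr i (mem_Icc.mp hi).1
  have hsupport : ∀ ω, ∑ i ∈ Icc 1 n, η i ω = ∑ i ∈ Icc j n, η i ω := by
    intro ω
    refine (sum_subset (Icc_subset_Icc_left hj) fun i hi hij => ?_).symm
    simp only [mem_Icc] at hi hij
    simp [hzero i (by omega)]
  have hscale : μ[fun ω => ‖(n : ℝ)⁻¹ • ∑ i ∈ Icc 1 n, η i ω‖ ^ 2 | ℱ j]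
      =ᵐ[μ] ((n : ℝ) ^ 2)⁻¹ • μ[fun ω => ‖∑ i ∈ Icc j n, η i ω‖ ^ 2 | ℱ j] := by
    simp_rw [hsupport, norm_smul, mul_pow, norm_inv, Real.norm_natCast, inv_pow]
    exact condExp_smul ((n : ℝ) ^ 2)⁻¹ (fun ω => ‖∑ i ∈ Icc j n, η i ω‖ ^ 2) _
  filter_upwards [hscale, condExp_norm_sum_sq_le (Icc j n) (fun i _ => Real.exp_pos _)
    (fun i _ => (hadapted i).mono (ℱ.le i) |>.aestronglyMeasurable) (fun i _ => hint i) hcond]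
    with ω hscale_ω hbound
  have hn0 : (n : ℝ) ^ 2 ≠ 0 := by positivity
  have hP : ∑ i ∈ Icc j n, p i ≤ C * (j : ℝ) ^ a := hsum j n hj
  calc (n : ℝ) ^ 2 * μ[fun ω => ‖(n : ℝ)⁻¹ • ∑ i ∈ Icc 1 n, η i ω‖ ^ 2 | ℱ j] ω
      = μ[fun ω => ‖∑ i ∈ Icc j n, η i ω‖ ^ 2 | ℱ j] ω := by
        rw [hscale_ω, Pi.smul_apply, smul_eq_mul, mul_inv_cancel_left₀ hn0]
    _ ≤ (∑ i ∈ Icc j n, p i) ^ 2 * ‖η j ω‖ ^ 2 := hbound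
    _ ≤ (C * (j : ℝ) ^ a) ^ 2 * ‖η j ω‖ ^ 2 := by gcongr
    _ = C ^ 2 * (j : ℝ) ^ (2 * a) * ‖η j ω‖ ^ 2 := by
        rw [mul_comm 2 a, Real.rpow_mul (Nat.cast_nonneg j), Real.rpow_two]
        ring
end

section
/- Let c := a/2 + b − ξ. If c > 1, then Σ_{j=1}^{n-1} (Σ_{i=j+1}^{n} i^{-c})² ≲ n^{3-2c} ∨ log n; if c = 1, then Σ_{j=1}^{n-1} (Σ_{i=j+1}^{n} i^{-1})² ≲ n (log n)²; and if c < 1, then Σ_{j=1}^{n-1} (Σ_{i=j+1}^{n} i^{-c})² ≲ n^{3-2c}, where ≲ hides a constant depending only on c. -/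
/-!
Since `x ↦ x ^ (-c)` is decreasing, every tail `∑_{i=j+1}^n i^(-c)` is at most
`∫_j^n x^(-c) dx`, hence at most `n^(1-c)/(1-c)` if `c < 1`, `log n` if `c = 1` and
`j^(1-c)/(c-1)` if `c > 1`. In the first two cases the `n - 1` outer terms are bounded
uniformly. For `c > 1` the outer sum is at most `(c-1)^(-2) ∑_{j<n} j^(2-2c)`, and a second
integral comparison makes this `O(n^(3-2c))`, `O(log n)` or `O(1)` according as `c < 3/2`,
`c = 3/2` or `c > 3/2`.
-/

open Finset

lemma sum_Icc_succ_le_integral {f : ℝ → ℝ} {m n : ℕ} (hmn : m ≤ n)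
    (hf : AntitoneOn f (Set.Icc (m : ℝ) n)) :
    ∑ i ∈ Icc (m + 1) n, f i ≤ ∫ x in (m : ℝ)..n, f x := by
  have h := hf.sum_le_integral_Ico hmn
  rwa [sum_Ico_add' (fun i : ℕ => f i), Ico_add_one_right_eq_Icc] at h

lemma sum_Icc_succ_rpow_neg_le_integral {d : ℝ} (hd : 0 ≤ d) {m n : ℕ} (hm : 0 < m)
    (hmn : m ≤ n) :
    ∑ i ∈ Icc (m + 1) n, (i : ℝ) ^ (-d) ≤ ∫ x in (m : ℝ)..n, x ^ (-d) :=
  sum_Icc_succ_le_integral hmn <|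
    (Real.antitoneOn_rpow_Ioi_of_exponent_nonpos (neg_nonpos.mpr hd)).mono
      fun _ hx => lt_of_lt_of_le (Nat.cast_pos.mpr hm) hx.1

lemma integral_rpow_neg_le_of_lt_one {d a b : ℝ} (hd : d < 1) (ha : 0 ≤ a) :
    ∫ x in a..b, x ^ (-d) ≤ b ^ (1 - d) / (1 - d) := by
  rw [integral_rpow (Or.inl (by linarith)), neg_add_eq_sub]
  gcongr
  exact sub_le_self _ (Real.rpow_nonneg ha _)

lemma integral_rpow_neg_le_of_one_lt {d a b : ℝ} (hd : 1 < d) (ha : 0 < a) (hb : 0 < b) :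
    ∫ x in a..b, x ^ (-d) ≤ a ^ (1 - d) / (d - 1) := by
  rw [integral_rpow (Or.inr ⟨by linarith, Set.notMem_uIcc_of_lt ha hb⟩), neg_add_eq_sub,
    ← neg_div_neg_eq, neg_sub, neg_sub]
  gcongr
  exact sub_le_self _ (Real.rpow_nonneg hb.le _)

lemma sum_Icc_succ_rpow_neg_le_of_lt_one {d : ℝ} (hd0 : 0 ≤ d) (hd1 : d < 1) {m n : ℕ}
    (hm : 0 < m) (hmn : m ≤ n) :
    ∑ i ∈ Icc (m + 1) n, (i : ℝ) ^ (-d) ≤ (n : ℝ) ^ (1 - d) / (1 - d) :=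
  (sum_Icc_succ_rpow_neg_le_integral hd0 hm hmn).trans
    (integral_rpow_neg_le_of_lt_one hd1 m.cast_nonneg)

lemma sum_Icc_succ_rpow_neg_le_of_one_lt {d : ℝ} (hd : 1 < d) {m n : ℕ} (hm : 0 < m)
    (hmn : m ≤ n) :
    ∑ i ∈ Icc (m + 1) n, (i : ℝ) ^ (-d) ≤ (m : ℝ) ^ (1 - d) / (d - 1) :=
  (sum_Icc_succ_rpow_neg_le_integral (by linarith) hm hmn).trans <|
    integral_rpow_neg_le_of_one_lt hd (Nat.cast_pos.mpr hm) (Nat.cast_pos.mpr (hm.trans_le hmn))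

lemma sum_Icc_succ_inv_le_log {m n : ℕ} (hm : 0 < m) (hmn : m ≤ n) :
    ∑ i ∈ Icc (m + 1) n, (i : ℝ)⁻¹ ≤ Real.log n := by
  have hm' : (0 : ℝ) < m := Nat.cast_pos.mpr hm
  have hn' : (0 : ℝ) < n := hm'.trans_le (Nat.cast_le.mpr hmn)
  have h := sum_Icc_succ_rpow_neg_le_integral zero_le_one hm hmn
  simp only [Real.rpow_neg_one] at h
  rw [integral_inv_of_pos hm' hn', Real.log_div hn'.ne' hm'.ne'] at h
  linarith [Real.log_nonneg (Nat.one_le_cast.mpr hm)]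

lemma sum_Icc_one_pred_rpow_neg_le {e : ℝ} (he : 0 ≤ e) {n : ℕ} (hn : 1 ≤ n) :
    ∑ j ∈ Icc 1 (n - 1), (j : ℝ) ^ (-e) ≤ 1 + ∫ x in (1 : ℝ)..n, x ^ (-e) := by
  calc ∑ j ∈ Icc 1 (n - 1), (j : ℝ) ^ (-e)
      ≤ ∑ j ∈ Icc 1 n, (j : ℝ) ^ (-e) :=
        sum_le_sum_of_subset_of_nonneg (Icc_subset_Icc_right (Nat.sub_le n 1))
          fun _ _ _ => by positivity
    _ = 1 + ∑ j ∈ Icc 2 n, (j : ℝ) ^ (-e) := by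
        rw [← add_sum_Ioc_eq_sum_Icc hn, ← Icc_add_one_left_eq_Ioc]; simp
    _ ≤ 1 + ∫ x in (1 : ℝ)..n, x ^ (-e) := by
        simpa using sum_Icc_succ_rpow_neg_le_integral he one_pos hn

lemma log_two_le_max_rpow_log {n : ℕ} (hn : 1 ≤ n) (s : ℝ) :
    Real.log 2 ≤ max ((n : ℝ) ^ s) (Real.log n) := by
  rcases hn.eq_or_lt with rfl | hn
  · simpa using Real.log_two_lt_d9.le.trans (by norm_num)
  · exact (Real.log_le_log two_pos (by exact_mod_cast hn)).trans (le_max_right _ _)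

lemma exists_sum_rpow_neg_le_mul_max {e : ℝ} (he : 0 < e) :
    ∃ K : ℝ, 0 < K ∧ ∀ n : ℕ, 1 ≤ n →
      ∑ j ∈ Icc 1 (n - 1), (j : ℝ) ^ (-e) ≤ K * max ((n : ℝ) ^ (1 - e)) (Real.log n) := by
  rcases lt_trichotomy e 1 with he1 | rfl | he1
  · have h1e : 0 < 1 - e := by linarith
    refine ⟨1 + 1 / (1 - e), by positivity, fun n hn => ?_⟩
    have hpow : 1 ≤ (n : ℝ) ^ (1 - e) := Real.one_le_rpow (Nat.one_le_cast.mpr hn) h1e.le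
    calc ∑ j ∈ Icc 1 (n - 1), (j : ℝ) ^ (-e)
        ≤ 1 + (n : ℝ) ^ (1 - e) / (1 - e) := (sum_Icc_one_pred_rpow_neg_le he.le hn).trans
          (by gcongr; exact integral_rpow_neg_le_of_lt_one he1 zero_le_one)
      _ ≤ (1 + 1 / (1 - e)) * (n : ℝ) ^ (1 - e) := by
        rw [add_mul, one_mul, one_div_mul_eq_div]; linarith
      _ ≤ _ := by gcongr; exact le_max_left _ _
  · refine ⟨2, two_pos, fun n hn => ?_⟩
    have h := sum_Icc_one_pred_rpow_neg_le zero_le_one hn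
    rw [sub_self, Real.rpow_zero]
    simp only [Real.rpow_neg_one] at h ⊢
    rw [integral_inv_of_pos one_pos (Nat.cast_pos.mpr hn), div_one] at h
    linarith [le_max_left 1 (Real.log n), le_max_right 1 (Real.log n)]
  · have he1' : 0 < e - 1 := by linarith
    refine ⟨(1 + 1 / (e - 1)) / Real.log 2, div_pos (by positivity) (Real.log_pos one_lt_two),
      fun n hn => ?_⟩
    calc ∑ j ∈ Icc 1 (n - 1), (j : ℝ) ^ (-e)
        ≤ 1 + 1 / (e - 1) := (sum_Icc_one_pred_rpow_neg_le he.le hn).trans <| by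
          gcongr
          simpa using integral_rpow_neg_le_of_one_lt he1 one_pos (Nat.cast_pos.mpr hn)
      _ = (1 + 1 / (e - 1)) / Real.log 2 * Real.log 2 := by field_simp
      _ ≤ _ := by gcongr; exact log_two_le_max_rpow_log hn _

lemma sum_Icc_one_pred_le_mul {f : ℕ → ℝ} {B : ℝ} (hB : 0 ≤ B) {n : ℕ}
    (hf : ∀ j ∈ Icc 1 (n - 1), f j ≤ B) :
    ∑ j ∈ Icc 1 (n - 1), f j ≤ n * B :=
  calc ∑ j ∈ Icc 1 (n - 1), f j ≤ #(Icc 1 (n - 1)) • B := sum_le_card_nsmul _ _ _ hf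
    _ = ((n - 1 : ℕ) : ℝ) * B := by simp
    _ ≤ n * B := by gcongr; exact Nat.sub_le n 1

lemma exists_sum_sq_sum_rpow_neg_le_of_lt_one {c : ℝ} (hc0 : 0 ≤ c) (hc1 : c < 1) :
    ∃ K : ℝ, 0 < K ∧ ∀ n : ℕ, 1 ≤ n →
      ∑ j ∈ Icc 1 (n - 1), (∑ i ∈ Icc (j + 1) n, (i : ℝ) ^ (-c)) ^ 2 ≤
        K * (n : ℝ) ^ (3 - 2 * c) := by
  have h1c : 0 < 1 - c := by linarith
  refine ⟨1 / (1 - c) ^ 2, by positivity, fun n hn => ?_⟩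
  have hn' : (0 : ℝ) < n := Nat.cast_pos.mpr hn
  have htail : ∀ j ∈ Icc 1 (n - 1),
      (∑ i ∈ Icc (j + 1) n, (i : ℝ) ^ (-c)) ^ 2 ≤ ((n : ℝ) ^ (1 - c) / (1 - c)) ^ 2 :=
    fun j hj => pow_le_pow_left₀ (sum_nonneg fun _ _ => by positivity)
      (sum_Icc_succ_rpow_neg_le_of_lt_one hc0 hc1 (mem_Icc.mp hj).1 (by grind)) 2
  calc _ ≤ n * ((n : ℝ) ^ (1 - c) / (1 - c)) ^ 2 :=
        sum_Icc_one_pred_le_mul (sq_nonneg _) htail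
    _ = 1 / (1 - c) ^ 2 * (n : ℝ) ^ (3 - 2 * c) := by
      rw [show 3 - 2 * c = 1 + (1 - c) * (2 : ℕ) by push_cast; ring, Real.rpow_add hn',
        Real.rpow_one, Real.rpow_mul_natCast hn'.le, div_pow]
      ring

lemma exists_sum_sq_sum_inv_le :
    ∃ K : ℝ, 0 < K ∧ ∀ n : ℕ, 1 ≤ n →
      ∑ j ∈ Icc 1 (n - 1), (∑ i ∈ Icc (j + 1) n, (i : ℝ)⁻¹) ^ 2 ≤
        K * n * Real.log n ^ 2 :=
  ⟨1, one_pos, fun n _ => by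
    rw [one_mul]
    exact sum_Icc_one_pred_le_mul (sq_nonneg _) fun j hj =>
      pow_le_pow_left₀ (sum_nonneg fun _ _ => by positivity)
        (sum_Icc_succ_inv_le_log (mem_Icc.mp hj).1 (by grind)) 2⟩

lemma sq_sum_Icc_succ_rpow_neg_le_of_one_lt {c : ℝ} (hc : 1 < c) {j n : ℕ} (hj : 0 < j)
    (hjn : j ≤ n) :
    (∑ i ∈ Icc (j + 1) n, (i : ℝ) ^ (-c)) ^ 2 ≤ (j : ℝ) ^ (-(2 * c - 2)) / (c - 1) ^ 2 :=
  calc (∑ i ∈ Icc (j + 1) n, (i : ℝ) ^ (-c)) ^ 2 ≤ ((j : ℝ) ^ (1 - c) / (c - 1)) ^ 2 :=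
        pow_le_pow_left₀ (sum_nonneg fun _ _ => by positivity)
          (sum_Icc_succ_rpow_neg_le_of_one_lt hc hj hjn) 2
    _ = (j : ℝ) ^ (-(2 * c - 2)) / (c - 1) ^ 2 := by
      rw [div_pow, ← Real.rpow_mul_natCast j.cast_nonneg]
      push_cast
      ring_nf

lemma exists_sum_sq_sum_rpow_neg_le_of_one_lt {c : ℝ} (hc : 1 < c) :
    ∃ K : ℝ, 0 < K ∧ ∀ n : ℕ, 1 ≤ n →
      ∑ j ∈ Icc 1 (n - 1), (∑ i ∈ Icc (j + 1) n, (i : ℝ) ^ (-c)) ^ 2 ≤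
        K * max ((n : ℝ) ^ (3 - 2 * c)) (Real.log n) := by
  obtain ⟨K, hK, hsum⟩ := exists_sum_rpow_neg_le_mul_max (e := 2 * c - 2) (by linarith)
  have hc1 : 0 < c - 1 := by linarith
  refine ⟨K / (c - 1) ^ 2, by positivity, fun n hn => ?_⟩
  calc _ ≤ ∑ j ∈ Icc 1 (n - 1), (j : ℝ) ^ (-(2 * c - 2)) / (c - 1) ^ 2 :=
        sum_le_sum fun j hj =>
          sq_sum_Icc_succ_rpow_neg_le_of_one_lt hc (mem_Icc.mp hj).1 (by grind)
    _ ≤ K * max ((n : ℝ) ^ (1 - (2 * c - 2))) (Real.log n) / (c - 1) ^ 2 := by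
      rw [← sum_div]; gcongr; exact hsum n hn
    _ = K / (c - 1) ^ 2 * max ((n : ℝ) ^ (3 - 2 * c)) (Real.log n) := by
      rw [show 1 - (2 * c - 2) = 3 - 2 * c by ring]; ring

theorem stmt_18_general (c : ℝ) (hcpos : 0 < c) :
    (1 < c → ∃ K : ℝ, 0 < K ∧ ∀ n : ℕ, 1 ≤ n →
        ∑ j ∈ Icc 1 (n - 1), (∑ i ∈ Icc (j + 1) n, (i : ℝ) ^ (-c)) ^ 2 ≤
          K * max ((n : ℝ) ^ (3 - 2 * c)) (Real.log n)) ∧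
      (c = 1 → ∃ K : ℝ, 0 < K ∧ ∀ n : ℕ, 1 ≤ n →
        ∑ j ∈ Icc 1 (n - 1), (∑ i ∈ Icc (j + 1) n, (i : ℝ)⁻¹) ^ 2 ≤
          K * n * Real.log n ^ 2) ∧
      (c < 1 → ∃ K : ℝ, 0 < K ∧ ∀ n : ℕ, 1 ≤ n →
        ∑ j ∈ Icc 1 (n - 1), (∑ i ∈ Icc (j + 1) n, (i : ℝ) ^ (-c)) ^ 2 ≤
          K * (n : ℝ) ^ (3 - 2 * c)) :=
  ⟨exists_sum_sq_sum_rpow_neg_le_of_one_lt, fun _ => exists_sum_sq_sum_inv_le,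
    exists_sum_sq_sum_rpow_neg_le_of_lt_one hcpos.le⟩

/-- Deterministic double-sum estimates in the proof of Lemma 3, with `c = a/2 + b − ξ`:
if `c > 1` the sum is `≲ n^{3−2c} ∨ log n`; if `c = 1` it is `≲ n (log n)²`; and if
`c < 1` it is `≲ n^{3−2c}`. -/
theorem stmt_18 (a b ξ : ℝ) (ha0 : 0 ≤ a) (ha1 : a ≤ 1) (hb : 0 < b) (hξ : 0 ≤ ξ)
    (c : ℝ) (hc : c = a / 2 + b - ξ) (hcpos : 0 < c) :
    (1 < c → ∃ K : ℝ, 0 < K ∧ ∀ n : ℕ, 1 ≤ n →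
        ∑ j ∈ Icc 1 (n - 1), (∑ i ∈ Icc (j + 1) n, (i : ℝ) ^ (-c)) ^ 2 ≤
          K * max ((n : ℝ) ^ (3 - 2 * c)) (Real.log n)) ∧
      (c = 1 → ∃ K : ℝ, 0 < K ∧ ∀ n : ℕ, 1 ≤ n →
        ∑ j ∈ Icc 1 (n - 1), (∑ i ∈ Icc (j + 1) n, (i : ℝ)⁻¹) ^ 2 ≤
          K * n * Real.log n ^ 2) ∧
      (c < 1 → ∃ K : ℝ, 0 < K ∧ ∀ n : ℕ, 1 ≤ n →
        ∑ j ∈ Icc 1 (n - 1), (∑ i ∈ Icc (j + 1) n, (i : ℝ) ^ (-c)) ^ 2 ≤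
          K * (n : ℝ) ^ (3 - 2 * c)) :=
  stmt_18_general c hcpos
end

section
/- Consider the linear SGD recursion β_i = β_{i-1} + γ(Y_i − X_i^⊤ β_{i-1}) X_i with constant step size γ, and the perturb-one difference η_i = β_i − β'_i, where β'_i is the same recursion run with the j-th sample replaced by an i.i.d. copy. If ‖X_i‖ ≤ R almost surely, |Y_i − X_i^⊤ β_{i-1}| ≤ M almost surely, γ ≤ R^{-1}·R^{-1} (i.e., γ‖X_i‖² ≤ 1), and λ_min(E[X X^⊤]) ≥ λ̲ > 0, then ‖η_j‖ ≤ 2γMR and for all i > j, E[‖η_i‖²/‖η_{i-1}‖² | F^{i-1}] ≤ exp(−γλ̲) on {η_{i-1} ≠ 0}. -/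
/-!
Before step `j` the two runs coincide, so `η_j` is the difference of two single gradient steps
taken from the same point, each of length at most `γMR`. After step `j` both runs see the same
sample, so `η_i = (I - γ X_i X_iᵀ) η_{i-1}`, and `γ‖X_i‖² ≤ 1` gives
`‖η_i‖² ≤ ‖η_{i-1}‖² - γ⟪X_i, η_{i-1}⟫²`. After dividing by `‖η_{i-1}‖²`, the direction
`u = η_{i-1}/‖η_{i-1}‖` is `F^{i-1}`-measurable while `X_i` is independent of `F^{i-1}`, so the
conditional mean of `⟪X_i, u⟫²` is `E⟪X, u⟫² ≥ λ̲`; finally `1 - γλ̲ ≤ exp(-γλ̲)`.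
-/

open MeasureTheory ProbabilityTheory RealInnerProductSpace

section SGDStep

variable {E : Type*} [NormedAddCommGroup E] [InnerProductSpace ℝ E]

def sgdStep (γ : ℝ) (x : E) (y : ℝ) (b : E) : E :=
  b + (γ * (y - ⟪x, b⟫)) • x

lemma sgdStep_sub_sgdStep (γ : ℝ) (x : E) (y : ℝ) (b b' : E) :
    sgdStep γ x y b - sgdStep γ x y b' = (b - b') - (γ * ⟪x, b - b'⟫) • x := by
  simp only [sgdStep, inner_sub_right]
  module

lemma norm_sgdStep_sub_self_le {γ M R : ℝ} (hγ : 0 ≤ γ) {x : E} {y : ℝ} {b : E}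
    (hres : |y - ⟪x, b⟫| ≤ M) (hx : ‖x‖ ≤ R) : ‖sgdStep γ x y b - b‖ ≤ γ * M * R := by
  rw [sgdStep, add_sub_cancel_left, norm_smul, Real.norm_eq_abs, abs_mul, abs_of_nonneg hγ]
  have hM : 0 ≤ M := (abs_nonneg _).trans hres
  gcongr

lemma norm_sgdStep_sub_sgdStep_le {γ M R : ℝ} (hγ : 0 ≤ γ) {x x' : E} {y y' : ℝ} {b : E}
    (hres : |y - ⟪x, b⟫| ≤ M) (hres' : |y' - ⟪x', b⟫| ≤ M) (hx : ‖x‖ ≤ R) (hx' : ‖x'‖ ≤ R) :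
    ‖sgdStep γ x y b - sgdStep γ x' y' b‖ ≤ 2 * γ * M * R :=
  calc ‖sgdStep γ x y b - sgdStep γ x' y' b‖
      ≤ ‖sgdStep γ x y b - b‖ + ‖sgdStep γ x' y' b - b‖ := by
        simpa only [dist_eq_norm] using dist_triangle_right _ _ b
    _ ≤ γ * M * R + γ * M * R := add_le_add (norm_sgdStep_sub_self_le hγ hres hx)
        (norm_sgdStep_sub_self_le hγ hres' hx')
    _ = 2 * γ * M * R := by ring

lemma norm_sub_smul_inner_sq_le {γ : ℝ} (hγ : 0 ≤ γ) {x : E} (hx : γ * ‖x‖ ^ 2 ≤ 1) (η : E) :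
    ‖η - (γ * ⟪x, η⟫) • x‖ ^ 2 ≤ ‖η‖ ^ 2 - γ * ⟪x, η⟫ ^ 2 := by
  rw [norm_sub_sq_real, real_inner_smul_right, real_inner_comm x η, norm_smul, mul_pow,
    Real.norm_eq_abs, sq_abs]
  have := mul_le_mul_of_nonneg_left hx (mul_nonneg hγ (sq_nonneg ⟪x, η⟫))
  linear_combination this

lemma norm_sub_smul_inner_sq_div_le {γ : ℝ} (hγ : 0 ≤ γ) {x : E} (hx : γ * ‖x‖ ^ 2 ≤ 1) (η : E) :
    ‖η - (γ * ⟪x, η⟫) • x‖ ^ 2 / ‖η‖ ^ 2 ≤ 1 - γ * ⟪x, ‖η‖⁻¹ • η⟫ ^ 2 := by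
  rcases eq_or_ne η 0 with rfl | hη
  · simp
  have hη' : 0 < ‖η‖ := norm_pos_iff.mpr hη
  rw [div_le_iff₀ (by positivity), real_inner_smul_right]
  calc ‖η - (γ * ⟪x, η⟫) • x‖ ^ 2 ≤ ‖η‖ ^ 2 - γ * ⟪x, η⟫ ^ 2 := norm_sub_smul_inner_sq_le hγ hx η
    _ = (1 - γ * (‖η‖⁻¹ * ⟪x, η⟫) ^ 2) * ‖η‖ ^ 2 := by field_simp

end SGDStep

lemma inner_sq_eq_sum {ι : Type*} [Fintype ι] (x v : EuclideanSpace ℝ ι) :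
    ⟪x, v⟫ ^ 2 = ∑ q : ι × ι, (v q.1 * v q.2) * (x q.1 * x q.2) := by
  rw [← Finset.univ_product_univ, Finset.sum_product, PiLp.inner_apply, sq, Finset.sum_mul_sum]
  simp only [RCLike.inner_apply, conj_trivial]
  exact Finset.sum_congr rfl fun i _ => Finset.sum_congr rfl fun k _ => by ring

lemma norm_apply_mul_apply_le_norm_sq {ι : Type*} [Fintype ι] (x : EuclideanSpace ℝ ι) (k l : ι) :
    ‖x k * x l‖ ≤ ‖x‖ ^ 2 := by
  rw [norm_mul, sq]
  exact mul_le_mul (PiLp.norm_apply_le x k) (PiLp.norm_apply_le x l) (norm_nonneg _)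
    (norm_nonneg _)

theorem condExp_mul_of_indep {Ω : Type*} {m m' m0 : MeasurableSpace Ω} {μ : Measure Ω}
    [IsFiniteMeasure μ] (hm : m ≤ m0) (hm' : m' ≤ m0) {f g : Ω → ℝ} {C : ℝ}
    (hf : StronglyMeasurable[m] f) (hf_bd : ∀ ω, ‖f ω‖ ≤ C)
    (hg : StronglyMeasurable[m'] g) (hg_int : Integrable g μ) (hindep : Indep m' m μ) :
    μ[f * g | m] =ᵐ[μ] fun ω => f ω * ∫ ω', g ω' ∂μ := by
  have hfg : Integrable (f * g) μ :=
    hg_int.bdd_mul (hf.mono hm).aestronglyMeasurable (ae_of_all _ hf_bd)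
  filter_upwards [condExp_mul_of_stronglyMeasurable_left hf hfg hg_int,
    condExp_indep_eq hm' hm hg hindep] with ω hω hω'
  rw [hω, Pi.mul_apply, hω']

theorem condExp_inner_sq_of_indep {ι Ω : Type*} [Fintype ι] {m m0 : MeasurableSpace Ω}
    {μ : Measure Ω} [IsFiniteMeasure μ] (hm : m ≤ m0) {X u : Ω → EuclideanSpace ℝ ι}
    (hX : Measurable X) (hX_sq : Integrable (fun ω => ‖X ω‖ ^ 2) μ)
    (hu : StronglyMeasurable[m] u) {C : ℝ} (hu_bd : ∀ ω, ‖u ω‖ ≤ C)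
    (hindep : Indep (MeasurableSpace.comap X inferInstance) m μ) :
    μ[fun ω => ⟪X ω, u ω⟫ ^ 2 | m] =ᵐ[μ] fun ω => ∫ ω', ⟪X ω', u ω⟫ ^ 2 ∂μ := by
  have hXX : ∀ q : ι × ι, StronglyMeasurable[MeasurableSpace.comap X inferInstance]
      fun ω => X ω q.1 * X ω q.2 := fun q =>
    ((by fun_prop : Measurable fun x : EuclideanSpace ℝ ι => x q.1 * x q.2).comp
      (Measurable.of_comap_le le_rfl)).stronglyMeasurable
  have hXX_int : ∀ q : ι × ι, Integrable (fun ω => X ω q.1 * X ω q.2) μ := fun q =>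
    hX_sq.mono' ((hXX q).mono hX.comap_le).aestronglyMeasurable
      (ae_of_all _ fun ω => norm_apply_mul_apply_le_norm_sq _ _ _)
  have huu : ∀ q : ι × ι, StronglyMeasurable[m] fun ω => u ω q.1 * u ω q.2 := fun q =>
    ((by fun_prop : Measurable fun x : EuclideanSpace ℝ ι => x q.1 * x q.2).comp
      hu.measurable).stronglyMeasurable
  have huu_bd : ∀ q : ι × ι, ∀ ω, ‖u ω q.1 * u ω q.2‖ ≤ C ^ 2 := fun q ω =>
    (norm_apply_mul_apply_le_norm_sq _ _ _).trans
      (pow_le_pow_left₀ (norm_nonneg _) (hu_bd ω) 2)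
  have hterm : ∀ q : ι × ι, Integrable
      ((fun ω => u ω q.1 * u ω q.2) * fun ω => X ω q.1 * X ω q.2) μ := fun q =>
    (hXX_int q).bdd_mul ((huu q).mono hm).aestronglyMeasurable (ae_of_all _ (huu_bd q))
  -- in coordinates, each term splits into an `m`-measurable factor and one independent of `m`
  have hsum : (fun ω => ⟪X ω, u ω⟫ ^ 2)
      = ∑ q : ι × ι, (fun ω => u ω q.1 * u ω q.2) * fun ω => X ω q.1 * X ω q.2 := by
    ext ω
    simp only [inner_sq_eq_sum, Finset.sum_apply, Pi.mul_apply]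
  have hfreeze : ∀ᵐ ω ∂μ, ∀ q : ι × ι,
      μ[(fun ω => u ω q.1 * u ω q.2) * fun ω => X ω q.1 * X ω q.2 | m] ω
        = u ω q.1 * u ω q.2 * ∫ ω', X ω' q.1 * X ω' q.2 ∂μ :=
    ae_all_iff.mpr fun q =>
      condExp_mul_of_indep hm hX.comap_le (huu q) (huu_bd q) (hXX q) (hXX_int q) hindep
  rw [hsum]
  filter_upwards [condExp_finsetSum (s := Finset.univ) (fun q _ => hterm q) m, hfreeze]
    with ω hω hω'
  rw [hω, Finset.sum_apply]
  simp only [hω', inner_sq_eq_sum]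
  rw [integral_finsetSum _ fun q _ => (hXX_int q).const_mul _]
  simp only [integral_const_mul]

theorem ae_mul_norm_sq_le_condExp_inner_sq {ι Ω : Type*} [Fintype ι]
    {m m0 : MeasurableSpace Ω} {μ : Measure Ω} [IsFiniteMeasure μ] (hm : m ≤ m0)
    {X u : Ω → EuclideanSpace ℝ ι} (hX : Measurable X)
    (hX_sq : Integrable (fun ω => ‖X ω‖ ^ 2) μ) (hu : StronglyMeasurable[m] u) {C : ℝ}
    (hu_bd : ∀ ω, ‖u ω‖ ≤ C) (hindep : Indep (MeasurableSpace.comap X inferInstance) m μ)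
    {lam : ℝ} (heig : ∀ v, lam * ‖v‖ ^ 2 ≤ ∫ ω, ⟪X ω, v⟫ ^ 2 ∂μ) :
    ∀ᵐ ω ∂μ, lam * ‖u ω‖ ^ 2 ≤ μ[fun ω => ⟪X ω, u ω⟫ ^ 2 | m] ω := by
  filter_upwards [condExp_inner_sq_of_indep hm hX hX_sq hu hu_bd hindep] with ω hω
  exact hω ▸ heig (u ω)

theorem condExp_norm_sub_smul_inner_sq_div_le_exp {ι Ω : Type*} [Fintype ι]
    {m m0 : MeasurableSpace Ω} {μ : Measure Ω} [IsFiniteMeasure μ] (hm : m ≤ m0)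
    {η X : Ω → EuclideanSpace ℝ ι} (hη : StronglyMeasurable[m] η) (hX : Measurable X)
    (hindep : Indep (MeasurableSpace.comap X inferInstance) m μ)
    {γ R lam : ℝ} (hγ : 0 ≤ γ) (hX_bd : ∀ᵐ ω ∂μ, ‖X ω‖ ≤ R) (hγR : γ * R ^ 2 ≤ 1)
    (heig : ∀ v, lam * ‖v‖ ^ 2 ≤ ∫ ω, ⟪X ω, v⟫ ^ 2 ∂μ) :
    ∀ᵐ ω ∂μ, η ω ≠ 0 →
      μ[fun ω => ‖η ω - (γ * ⟪X ω, η ω⟫) • X ω‖ ^ 2 / ‖η ω‖ ^ 2 | m] ω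
        ≤ Real.exp (-(γ * lam)) := by
  set u : Ω → EuclideanSpace ℝ ι := fun ω => ‖η ω‖⁻¹ • η ω
  set q : Ω → ℝ := fun ω => ⟪X ω, u ω⟫ ^ 2
  have hu : StronglyMeasurable[m] u := hη.norm.measurable.inv.stronglyMeasurable.smul hη
  have hu_bd : ∀ ω, ‖u ω‖ ≤ 1 := fun ω =>
    mem_closedBall_zero_iff.mp (inv_norm_smul_mem_unitClosedBall _)
  have hq_le : ∀ ω, q ω ≤ ‖X ω‖ ^ 2 := fun ω => by
    have h := (abs_real_inner_le_norm (X ω) (u ω)).trans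
      (mul_le_of_le_one_right (norm_nonneg _) (hu_bd ω))
    simpa [q, sq_abs] using pow_le_pow_left₀ (abs_nonneg _) h 2
  have hX_sq : Integrable (fun ω => ‖X ω‖ ^ 2) μ :=
    .of_bound (hX.norm.pow_const 2).aestronglyMeasurable (R ^ 2) <| by
      filter_upwards [hX_bd] with ω hω
      simpa using pow_le_pow_left₀ (norm_nonneg _) hω 2
  have hq_int : Integrable q μ :=
    hX_sq.mono' ((hX.inner (hu.mono hm).measurable).pow_const 2).aestronglyMeasurable
      (ae_of_all _ fun ω => by simpa [q] using hq_le ω)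
  have hstep : ∀ᵐ ω ∂μ, ‖η ω - (γ * ⟪X ω, η ω⟫) • X ω‖ ^ 2 / ‖η ω‖ ^ 2 ≤ 1 - γ * q ω := by
    filter_upwards [hX_bd] with ω hω
    refine norm_sub_smul_inner_sq_div_le hγ ?_ _
    calc γ * ‖X ω‖ ^ 2 ≤ γ * R ^ 2 := by gcongr
      _ ≤ 1 := hγR
  have hψ_int : Integrable (fun ω => 1 - γ * q ω) μ := (integrable_const 1).sub (hq_int.const_mul γ)
  have hφ_int : Integrable
      (fun ω => ‖η ω - (γ * ⟪X ω, η ω⟫) • X ω‖ ^ 2 / ‖η ω‖ ^ 2) μ := by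
    have hη₀ : Measurable η := (hη.mono hm).measurable
    refine .of_bound (by fun_prop : Measurable _).aestronglyMeasurable 1 ?_
    filter_upwards [hstep] with ω hω
    rw [Real.norm_of_nonneg (by positivity)]
    nlinarith [sq_nonneg ⟪X ω, u ω⟫]
  have hψ : μ[fun ω => 1 - γ * q ω | m] =ᵐ[μ] fun ω => 1 - γ * μ[q | m] ω := by
    change μ[(fun _ => (1 : ℝ)) - γ • q | m] =ᵐ[μ] _
    filter_upwards [condExp_sub (integrable_const 1) (hq_int.smul γ) m, condExp_smul γ q m]
      with ω h_sub h_smul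
    rw [h_sub, Pi.sub_apply, condExp_const hm, h_smul, Pi.smul_apply, smul_eq_mul]
  filter_upwards [condExp_mono hφ_int hψ_int hstep, hψ,
    ae_mul_norm_sq_le_condExp_inner_sq hm hX hX_sq hu hu_bd hindep heig]
    with ω h_mono h_eq h_eig hηω
  have hu_norm : ‖u ω‖ = 1 := norm_smul_inv_norm hηω
  calc _ ≤ μ[fun ω => 1 - γ * q ω | m] ω := h_mono
    _ = 1 - γ * μ[q | m] ω := h_eq
    _ ≤ 1 - γ * lam := by gcongr; simpa [hu_norm] using h_eig
    _ ≤ Real.exp (-(γ * lam)) := by linarith [Real.add_one_le_exp (-(γ * lam))]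

theorem stmt_19_general {Ω : Type*} {m0 : MeasurableSpace Ω} (μ : Measure Ω)
    [IsProbabilityMeasure μ] (ℱ : Filtration ℕ m0) {p : ℕ}
    (X : ℕ → Ω → EuclideanSpace ℝ (Fin p)) (Y : ℕ → Ω → ℝ)
    (X' : Ω → EuclideanSpace ℝ (Fin p)) (Y' : Ω → ℝ)
    (β β' : ℕ → Ω → EuclideanSpace ℝ (Fin p))
    (γ R M lam : ℝ) (j : ℕ) (hj : 1 ≤ j)
    (hγ : 0 < γ)
    (hγR : γ * R ^ 2 ≤ 1)
    -- the SGD recursions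
    (hβ0 : β 0 = 0) (hβ'0 : β' 0 = 0)
    (hβrec : ∀ i : ℕ, β (i + 1) = fun ω =>
      β i ω + (γ * (Y (i + 1) ω - ⟪X (i + 1) ω, β i ω⟫)) • X (i + 1) ω)
    (hβ'rec : ∀ i : ℕ, i + 1 ≠ j → β' (i + 1) = fun ω =>
      β' i ω + (γ * (Y (i + 1) ω - ⟪X (i + 1) ω, β' i ω⟫)) • X (i + 1) ω)
    (hβ'j : β' j = fun ω =>
      β' (j - 1) ω + (γ * (Y' ω - ⟪X' ω, β' (j - 1) ω⟫)) • X' ω)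
    -- almost sure boundedness
    (hXbd : ∀ i, ∀ᵐ ω ∂μ, ‖X i ω‖ ≤ R) (hX'bd : ∀ᵐ ω ∂μ, ‖X' ω‖ ≤ R)
    (hres : ∀ i, 1 ≤ i → ∀ᵐ ω ∂μ,
      |Y i ω - ⟪X i ω, β (i - 1) ω⟫| ≤ M ∧ |Y i ω - ⟪X i ω, β' (i - 1) ω⟫| ≤ M)
    (hres' : ∀ᵐ ω ∂μ, |Y' ω - ⟪X' ω, β' (j - 1) ω⟫| ≤ M)
    -- adaptedness and independence of the fresh sample from the past
    (hβad : ∀ i, StronglyMeasurable[ℱ i] (β i))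
    (hβ'ad : ∀ i, StronglyMeasurable[ℱ i] (β' i))
    (hXad : ∀ i, StronglyMeasurable[ℱ i] (X i))
    (hindep : ∀ i, 1 ≤ i →
      ProbabilityTheory.Indep (MeasurableSpace.comap (X i) inferInstance)
        (ℱ (i - 1)) μ)
    -- lower bound on the smallest eigenvalue of E[X Xᵀ]
    (heig : ∀ i, 1 ≤ i → ∀ v : EuclideanSpace ℝ (Fin p),
      lam * ‖v‖ ^ 2 ≤ ∫ ω, ⟪X i ω, v⟫ ^ 2 ∂μ) :
    (∀ᵐ ω ∂μ, ‖β j ω - β' j ω‖ ≤ 2 * γ * M * R) ∧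
      ∀ i : ℕ, j < i → ∀ᵐ ω ∂μ,
        β (i - 1) ω - β' (i - 1) ω ≠ 0 →
        (μ[fun ω' => ‖β i ω' - β' i ω'‖ ^ 2 / ‖β (i - 1) ω' - β' (i - 1) ω'‖ ^ 2 |
            ℱ (i - 1)]) ω ≤ Real.exp (-(γ * lam)) := by
  have hstep : ∀ i, β (i + 1) = fun ω => sgdStep γ (X (i + 1) ω) (Y (i + 1) ω) (β i ω) := hβrec
  have hstep' : ∀ i, i + 1 ≠ j →
      β' (i + 1) = fun ω => sgdStep γ (X (i + 1) ω) (Y (i + 1) ω) (β' i ω) := hβ'rec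
  refine ⟨?_, fun i hi => ?_⟩
  · have hagree : ∀ i < j, β' i = β i := by
      intro i hi
      induction i with
      | zero => rw [hβ0, hβ'0]
      | succ n ih => rw [hβ'rec n hi.ne, hβrec n, ih (by omega)]
    obtain ⟨k, rfl⟩ : ∃ k, j = k + 1 := ⟨j - 1, by omega⟩
    simp only [Nat.add_sub_cancel, hagree k (by omega)] at hβ'j hres'
    filter_upwards [hres (k + 1) hj, hres', hXbd (k + 1), hX'bd] with ω hω hω' hXω hX'ω
    rw [hstep k, hβ'j]
    exact norm_sgdStep_sub_sgdStep_le hγ.le (by simpa using hω.1) hω' hXω hX'ω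
  · obtain ⟨k, rfl⟩ : ∃ k, i = k + 1 := ⟨i - 1, by omega⟩
    have hdiff : ∀ ω, β (k + 1) ω - β' (k + 1) ω
        = (β k ω - β' k ω) - (γ * ⟪X (k + 1) ω, β k ω - β' k ω⟫) • X (k + 1) ω := fun ω => by
      rw [hstep k, hstep' k (by omega), sgdStep_sub_sgdStep]
    have hindep_k := hindep (k + 1) (by omega)
    simp only [Nat.add_sub_cancel, hdiff] at hindep_k ⊢
    exact condExp_norm_sub_smul_inner_sq_div_le_exp (ℱ.le k) ((hβad k).sub (hβ'ad k))
      ((hXad (k + 1)).mono (ℱ.le _)).measurable hindep_k hγ.le (hXbd (k + 1)) hγR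
      (heig (k + 1) (by omega))

/-- Key intermediate facts in the stability analysis of constant-step linear SGD
(Theorem 2): with `β_i = β_{i−1} + γ(Y_i − X_i^⊤β_{i−1})X_i` and `β'_i` the same
recursion with the `j`-th sample replaced by an i.i.d. copy `(X', Y')`, setting
`η_i = β_i − β'_i`, if `‖X_i‖ ≤ R`, the residuals are bounded by `M`, `γ‖X_i‖² ≤ 1`
and `λ_min(E[X X^⊤]) ≥ λ̲ > 0`, then `‖η_j‖ ≤ 2γMR` a.s. and for `i > j`,
`E[‖η_i‖²/‖η_{i−1}‖² | F^{i−1}] ≤ exp(−γλ̲)` a.s. on `{η_{i−1} ≠ 0}`. -/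
theorem stmt_19 {Ω : Type*} {m0 : MeasurableSpace Ω} (μ : Measure Ω)
    [IsProbabilityMeasure μ] (ℱ : Filtration ℕ m0) {p : ℕ}
    (X : ℕ → Ω → EuclideanSpace ℝ (Fin p)) (Y : ℕ → Ω → ℝ)
    (X' : Ω → EuclideanSpace ℝ (Fin p)) (Y' : Ω → ℝ)
    (β β' : ℕ → Ω → EuclideanSpace ℝ (Fin p))
    (γ R M lam : ℝ) (j : ℕ) (hj : 1 ≤ j)
    (hγ : 0 < γ) (hR : 0 < R) (hM : 0 < M) (hlam : 0 < lam)
    (hγR : γ * R ^ 2 ≤ 1)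
    -- the SGD recursions
    (hβ0 : β 0 = 0) (hβ'0 : β' 0 = 0)
    (hβrec : ∀ i : ℕ, β (i + 1) = fun ω =>
      β i ω + (γ * (Y (i + 1) ω - ⟪X (i + 1) ω, β i ω⟫)) • X (i + 1) ω)
    (hβ'rec : ∀ i : ℕ, i + 1 ≠ j → β' (i + 1) = fun ω =>
      β' i ω + (γ * (Y (i + 1) ω - ⟪X (i + 1) ω, β' i ω⟫)) • X (i + 1) ω)
    (hβ'j : β' j = fun ω =>
      β' (j - 1) ω + (γ * (Y' ω - ⟪X' ω, β' (j - 1) ω⟫)) • X' ω)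
    -- almost sure boundedness
    (hXbd : ∀ i, ∀ᵐ ω ∂μ, ‖X i ω‖ ≤ R) (hX'bd : ∀ᵐ ω ∂μ, ‖X' ω‖ ≤ R)
    (hres : ∀ i, 1 ≤ i → ∀ᵐ ω ∂μ,
      |Y i ω - ⟪X i ω, β (i - 1) ω⟫| ≤ M ∧ |Y i ω - ⟪X i ω, β' (i - 1) ω⟫| ≤ M)
    (hres' : ∀ᵐ ω ∂μ, |Y' ω - ⟪X' ω, β' (j - 1) ω⟫| ≤ M)
    -- adaptedness and independence of the fresh sample from the past
    (hβad : ∀ i, StronglyMeasurable[ℱ i] (β i))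
    (hβ'ad : ∀ i, StronglyMeasurable[ℱ i] (β' i))
    (hXad : ∀ i, StronglyMeasurable[ℱ i] (X i))
    (hindep : ∀ i, 1 ≤ i →
      ProbabilityTheory.Indep (MeasurableSpace.comap (X i) inferInstance)
        (ℱ (i - 1)) μ)
    -- lower bound on the smallest eigenvalue of E[X Xᵀ]
    (heig : ∀ i, 1 ≤ i → ∀ v : EuclideanSpace ℝ (Fin p),
      lam * ‖v‖ ^ 2 ≤ ∫ ω, ⟪X i ω, v⟫ ^ 2 ∂μ) :
    (∀ᵐ ω ∂μ, ‖β j ω - β' j ω‖ ≤ 2 * γ * M * R) ∧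
      ∀ i : ℕ, j < i → ∀ᵐ ω ∂μ,
        β (i - 1) ω - β' (i - 1) ω ≠ 0 →
        (μ[fun ω' => ‖β i ω' - β' i ω'‖ ^ 2 / ‖β (i - 1) ω' - β' (i - 1) ω'‖ ^ 2 |
            ℱ (i - 1)]) ω ≤ Real.exp (-(γ * lam)) :=
  stmt_19_general μ ℱ X Y X' Y' β β' γ R M lam j hj hγ hγR hβ0 hβ'0 hβrec hβ'rec hβ'j hXbd hX'bd
    hres hres' hβad hβ'ad hXad hindep heig
end
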